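/- Assume q_j(x; G₀) > 0 for every j ∈ {1, …, J} and every x ∈ 𝒳, where G₀ ∈ 𝒫. Then for every j ∈ {1, …, J} and every η ∈ (0, 1), there exists an open neighborhood W of G₀ in the weak topology on 𝒫 such that for every G ∈ W and every x ∈ 𝒳, |q_j(x; G)/q_j(x; G₀) − 1| ≤ η. -/

import Mathlib

/-!
The map `(G, x) ↦ q_j(x; G)` is jointly continuous on `𝒫 × (ℝ^d)^J`. Indeed, `G₀` is tight, so
most of its mass sits on a compact set `K`; by the tube lemma, `k_j(x, ·)` is uniformly close to
`k_j(x₀, ·)` on an open `V ⊇ K` for `x` near `x₀`, and by the portmanteau theorem every `G` weakly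
close to `G₀` still gives `Vᶜ` small mass. As `q_j(·; G₀) > 0` on `𝒳`, the ratio
`q_j(x; G) / q_j(x; G₀)` is then continuous at each `(G₀, x)` with `x ∈ 𝒳`, and the tube lemma
over the compact `𝒳` produces a single weak neighbourhood of `G₀` that works for all `x ∈ 𝒳`.
-/

open MeasureTheory ProbabilityTheory Filter Real

noncomputable section

/-- The multinomial logit kernel `k_j(x, β)`. -/
def mlogit {d J : ℕ} (j : Fin J) (x : Fin J → EuclideanSpace ℝ (Fin d))
    (β : EuclideanSpace ℝ (Fin d)) : ℝ :=
  Real.exp (inner ℝ (x j) β : ℝ) / ∑ l : Fin J, Real.exp (inner ℝ (x l) β : ℝ)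

/-- Choice probability `q_j(x; G)`. -/
def choiceProb {d J : ℕ} (j : Fin J) (x : Fin J → EuclideanSpace ℝ (Fin d))
    (G : Measure (EuclideanSpace ℝ (Fin d))) : ℝ :=
  ∫ β, mlogit j x β ∂G

open Topology

namespace MeasureTheory

variable {Ω : Type*} [MeasurableSpace Ω]

lemma abs_integral_le_add_mul_measureReal_compl {μ : Measure Ω} [IsProbabilityMeasure μ]
    {g : Ω → ℝ} {V : Set Ω} (hV : MeasurableSet V) {δ C : ℝ} (hδ : 0 ≤ δ)
    (hgV : ∀ ω ∈ V, |g ω| ≤ δ) (hgC : ∀ ω, |g ω| ≤ C) :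
    |∫ ω, g ω ∂μ| ≤ δ + C * μ.real Vᶜ := by
  have hint : Integrable (fun ω => δ + Vᶜ.indicator (fun _ => C) ω) μ :=
    (integrable_const δ).add ((integrable_const C).indicator hV.compl)
  have hbound : ∀ ω, |g ω| ≤ δ + Vᶜ.indicator (fun _ => C) ω := by
    intro ω
    by_cases hω : ω ∈ V
    · simpa [hω] using hgV ω hω
    · simpa [hω] using (hgC ω).trans (le_add_of_nonneg_left hδ)
  calc |∫ ω, g ω ∂μ| ≤ ∫ ω, |g ω| ∂μ := abs_integral_le_integral_abs
    _ ≤ ∫ ω, (δ + Vᶜ.indicator (fun _ => C) ω) ∂μ :=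
        integral_mono_of_nonneg (.of_forall fun _ => abs_nonneg _) hint (.of_forall hbound)
    _ = δ + C * μ.real Vᶜ := by
        rw [integral_add (integrable_const δ) ((integrable_const C).indicator hV.compl),
          integral_const, integral_indicator_const C hV.compl]
        simp [mul_comm]

variable [TopologicalSpace Ω] [OpensMeasurableSpace Ω] [HasOuterApproxClosed Ω]

lemma ProbabilityMeasure.eventually_measureReal_lt_of_isClosed {μ₀ : ProbabilityMeasure Ω}
    {F : Set Ω} (hF : IsClosed F) {δ : ℝ} (h : (μ₀ : Measure Ω).real F < δ) :
    ∀ᶠ μ : ProbabilityMeasure Ω in 𝓝 μ₀, (μ : Measure Ω).real F < δ := by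
  have h₀ : (μ₀ : Measure Ω) F < ENNReal.ofReal δ :=
    (ENNReal.lt_ofReal_iff_toReal_lt (measure_ne_top _ _)).2 h
  filter_upwards [eventually_lt_of_limsup_lt
    ((ProbabilityMeasure.limsup_measure_closed_le_of_tendsto tendsto_id hF).trans_lt h₀)]
    with μ hμ using ENNReal.toReal_lt_of_lt_ofReal hμ

variable {X : Type*} [TopologicalSpace X] {f : X → Ω → ℝ} {C : ℝ}

theorem ProbabilityMeasure.continuousAt_integral_of_continuous_uncurry
    (hf : Continuous (Function.uncurry f)) (hC : ∀ x ω, |f x ω| ≤ C)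
    {μ₀ : ProbabilityMeasure Ω} (hμ₀ : IsTightMeasureSet {(μ₀ : Measure Ω)}) (x₀ : X) :
    ContinuousAt (fun p : ProbabilityMeasure Ω × X => ∫ ω, f p.2 ω ∂(p.1 : Measure Ω))
      (μ₀, x₀) := by
  have hfx : ∀ x, Continuous (f x) := fun x => hf.comp (.prodMk_right x)
  have hint : ∀ (μ : ProbabilityMeasure Ω) x, Integrable (f x) μ := fun μ x =>
    .of_bound (hfx x).aestronglyMeasurable C (.of_forall (hC x))
  rw [ContinuousAt, Metric.tendsto_nhds]
  intro ε hε
  set δ := ε / (2 + 2 * |C|) with hδ_def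
  have hδ : 0 < δ := by positivity
  obtain ⟨K, hK, hμ₀K⟩ :=
    isTightMeasureSet_iff_exists_isCompact_measure_compl_le.1 hμ₀ (ENNReal.ofReal (δ / 2))
      (by simpa using hδ)
  -- tube lemma: `f x` is uniformly `δ`-close to `f x₀` on an open `V ⊇ K` for `x` near `x₀`
  obtain ⟨U, V, hU, hV, hx₀U, hKV, hUV⟩ := generalized_tube_lemma isCompact_singleton hK
    (n := {p | |f p.1 p.2 - f x₀ p.2| < δ})
    (isOpen_lt ((hf.sub ((hfx x₀).comp continuous_snd)).abs) continuous_const)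
    (by rintro ⟨x, ω⟩ ⟨hx, -⟩; obtain rfl : x = x₀ := hx; simpa using hδ)
  have htail : (μ₀ : Measure Ω).real Vᶜ < δ := by
    have hVK : (μ₀ : Measure Ω) Vᶜ ≤ ENNReal.ofReal (δ / 2) :=
      (measure_mono (Set.compl_subset_compl.2 hKV)).trans (hμ₀K _ rfl)
    exact (ENNReal.toReal_le_of_le_ofReal (by positivity) hVK).trans_lt (half_lt_self hδ)
  have hweak : Tendsto (fun μ : ProbabilityMeasure Ω => ∫ ω, f x₀ ω ∂(μ : Measure Ω)) (𝓝 μ₀)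
      (𝓝 (∫ ω, f x₀ ω ∂(μ₀ : Measure Ω))) :=
    (ProbabilityMeasure.continuous_integral_boundedContinuousFunction
      (BoundedContinuousFunction.ofNormedAddCommGroup (f x₀) (hfx x₀) C (hC x₀))).continuousAt
  rw [nhds_prod_eq]
  filter_upwards [((ProbabilityMeasure.eventually_measureReal_lt_of_isClosed hV.isClosed_compl
    htail).and (Metric.tendsto_nhds.1 hweak δ hδ)).prod_mk (hU.mem_nhds (hx₀U rfl))]
  rintro ⟨μ, x⟩ ⟨⟨hμV, hμ⟩, hx⟩
  have hclose : |∫ ω, f x ω ∂(μ : Measure Ω) - ∫ ω, f x₀ ω ∂(μ : Measure Ω)|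
      ≤ δ + 2 * |C| * δ := by
    rw [← integral_sub (hint μ x) (hint μ x₀)]
    refine (abs_integral_le_add_mul_measureReal_compl hV.measurableSet hδ.le
      (fun ω hω => (hUV (Set.mk_mem_prod hx hω)).le)
      (fun ω => (abs_sub _ _).trans (add_le_add (hC x ω) (hC x₀ ω)))).trans ?_
    nlinarith [le_abs_self C, abs_nonneg C, measureReal_nonneg (μ := (μ : Measure Ω)) (s := Vᶜ)]
  have hε_eq : (2 + 2 * |C|) * δ = ε := by rw [hδ_def]; field_simp
  rw [Real.dist_eq] at hμ ⊢
  calc _ ≤ _ := abs_sub_le _ (∫ ω, f x₀ ω ∂(μ : Measure Ω)) _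
    _ < ε := by linarith

end MeasureTheory

section

variable {d J : ℕ}

lemma sum_exp_inner_pos (j : Fin J) (x : Fin J → EuclideanSpace ℝ (Fin d))
    (β : EuclideanSpace ℝ (Fin d)) :
    0 < ∑ l : Fin J, Real.exp (inner ℝ (x l) β) :=
  Finset.sum_pos (fun _ _ => Real.exp_pos _) ⟨j, Finset.mem_univ j⟩

lemma abs_mlogit_le_one (j : Fin J) (x : Fin J → EuclideanSpace ℝ (Fin d))
    (β : EuclideanSpace ℝ (Fin d)) :
    |mlogit j x β| ≤ 1 := by
  have hpos := sum_exp_inner_pos j x β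
  rw [mlogit, abs_of_nonneg (div_nonneg (Real.exp_pos _).le hpos.le), div_le_one hpos]
  exact Finset.single_le_sum (f := fun l => Real.exp (inner ℝ (x l) β))
    (fun l _ => (Real.exp_pos _).le) (Finset.mem_univ j)

lemma continuous_mlogit (j : Fin J) :
    Continuous fun p : (Fin J → EuclideanSpace ℝ (Fin d)) × EuclideanSpace ℝ (Fin d) =>
      mlogit j p.1 p.2 := by
  unfold mlogit
  exact Continuous.div (by fun_prop) (by fun_prop) fun p => (sum_exp_inner_pos j p.1 p.2).ne'

end

theorem ratio_uniformly_close_on_weak_neighborhood_general {d J : ℕ}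
    (𝒳 : Set (Fin J → EuclideanSpace ℝ (Fin d))) (h𝒳 : IsCompact 𝒳)
    (G₀ : ProbabilityMeasure (EuclideanSpace ℝ (Fin d)))
    (hpos : ∀ j : Fin J, ∀ x ∈ 𝒳, 0 < choiceProb j x G₀)
    (j : Fin J) (η : ℝ) (hη : η ∈ Set.Ioo (0 : ℝ) 1) :
    ∃ W : Set (ProbabilityMeasure (EuclideanSpace ℝ (Fin d))),
      IsOpen W ∧ G₀ ∈ W ∧
        ∀ G ∈ W, ∀ x ∈ 𝒳,
          |choiceProb j x G / choiceProb j x G₀ - 1| ≤ η := by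
  let q (p : ProbabilityMeasure (EuclideanSpace ℝ (Fin d)) × (Fin J → EuclideanSpace ℝ (Fin d))) :
      ℝ := choiceProb j p.2 p.1
  have hq (x : Fin J → EuclideanSpace ℝ (Fin d)) : ContinuousAt q (G₀, x) :=
    ProbabilityMeasure.continuousAt_integral_of_continuous_uncurry (continuous_mlogit j)
      (abs_mlogit_le_one j) isTightMeasureSet_singleton x
  have hratio : ∀ x ∈ 𝒳, ∀ᶠ p in 𝓝 (G₀, x), |q (p.1, p.2) / q (G₀, p.2) - 1| ≤ η := by
    intro x hx
    have hq₀ : q (G₀, x) ≠ 0 := (hpos j x hx).ne'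
    have hcont : ContinuousAt (fun p => q p / q (G₀, p.2)) (G₀, x) :=
      (hq x).div ((hq x).comp' (f := fun p : _ × _ => (G₀, p.2))
        (continuousAt_const.prodMk continuousAt_snd)) hq₀
    have hball := hcont.eventually_mem (Metric.closedBall_mem_nhds _ hη.1)
    simpa only [div_self hq₀, Metric.mem_closedBall, Real.dist_eq] using hball
  obtain ⟨W, hW, hWopen, hG₀W⟩ := eventually_nhds_iff.1 <|
    h𝒳.eventually_forall_of_forall_eventually (P := fun G x => |q (G, x) / q (G₀, x) - 1| ≤ η)
      hratio
  exact ⟨W, hWopen, hG₀W, hW⟩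

/-- if the choice probabilities under `G₀` are positive on the compact set `𝒳`,
then for any `j` and `η ∈ (0,1)` there is a weak neighborhood `W` of `G₀` on which the ratio
`q_j(x;G)/q_j(x;G₀)` is uniformly within `η` of `1` over `x ∈ 𝒳`. -/
theorem ratio_uniformly_close_on_weak_neighborhood {d J : ℕ} (hJ : 2 ≤ J)
    (𝒳 : Set (Fin J → EuclideanSpace ℝ (Fin d))) (h𝒳 : IsCompact 𝒳)
    (G₀ : ProbabilityMeasure (EuclideanSpace ℝ (Fin d)))
    (hpos : ∀ j : Fin J, ∀ x ∈ 𝒳, 0 < choiceProb j x G₀)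
    (j : Fin J) (η : ℝ) (hη : η ∈ Set.Ioo (0 : ℝ) 1) :
    ∃ W : Set (ProbabilityMeasure (EuclideanSpace ℝ (Fin d))),
      IsOpen W ∧ G₀ ∈ W ∧
        ∀ G ∈ W, ∀ x ∈ 𝒳,
          |choiceProb j x G / choiceProb j x G₀ - 1| ≤ η :=
  ratio_uniformly_close_on_weak_neighborhood_general 𝒳 h𝒳 G₀ hpos j η hη

end
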